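/- Let X be a finite set and p : X → ℝ≥0 a probability mass function with p(x) > 0 for all x. For N ∈ ℕ, equip X^N with the product measure p^N(x₁,…,x_N) = ∏_i p(x_i), and let H = −∑_{x∈X} p(x) log p(x) be the Shannon entropy. Then for every ε > 0, lim_{N→∞} p^N({ (x₁,…,x_N) : |−(1/N) log p^N(x₁,…,x_N) − H| > ε }) = 0. -/

import Mathlib

open Finset Filter Real

/-!
The empirical entropy rate `-(1/N) log ∏ i, p (x i)` is the sample mean of the i.i.d. variables
`-log p (x i)`, whose mean is `H`. Since product weights factor over coordinates, the cross terms
of the centred sum vanish and its second moment is `N σ²`, where `σ²` is the variance of `-log p`;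
Chebyshev's inequality then bounds the probability of an `ε`-deviation by `σ² / (N ε²)`.
-/

section ProductWeights

variable {ι X R : Type*} [Fintype ι] [DecidableEq ι] [Fintype X] [CommSemiring R]

theorem sum_prod_mul_prod_eq_prod_sum (p : X → R) (g : ι → X → R) :
    ∑ x : ι → X, (∏ i, p (x i)) * ∏ i, g i (x i) = ∏ i, ∑ a, p a * g i a := by
  simp_rw [← prod_mul_distrib]
  exact (Fintype.prod_sum fun i a => p a * g i a).symm

theorem sum_prod_mul_apply_mul_apply {p : X → R} (hp : ∑ a, p a = 1) (g h : X → R)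
    (i j : ι) :
    ∑ x : ι → X, (∏ k, p (x k)) * (g (x i) * h (x j)) =
      if i = j then ∑ a, p a * (g a * h a) else (∑ a, p a * g a) * ∑ a, p a * h a := by
  have hfactor : ∀ x : ι → X, g (x i) * h (x j) =
      ∏ k, (if k = i then g (x k) else 1) * (if k = j then h (x k) else 1) := by
    intro x
    rw [prod_mul_distrib, Fintype.prod_ite_eq', Fintype.prod_ite_eq']
  simp_rw [hfactor]
  rw [sum_prod_mul_prod_eq_prod_sum p
    (fun k a => (if k = i then g a else 1) * (if k = j then h a else 1))]
  split_ifs with hij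
  · subst hij
    have hmarginal : ∀ k,
        ∑ a, p a * ((if k = i then g a else 1) * (if k = i then h a else 1)) =
          if k = i then ∑ a, p a * (g a * h a) else 1 := by
      intro k
      split_ifs <;> simp [hp]
    simp_rw [hmarginal, Fintype.prod_ite_eq']
  · have hmarginal : ∀ k,
        ∑ a, p a * ((if k = i then g a else 1) * (if k = j then h a else 1)) =
          (if k = i then ∑ a, p a * g a else 1) * (if k = j then ∑ a, p a * h a else 1) := by
      intro k
      by_cases hki : k = i
      · simp [hki, hij]
      · by_cases hkj : k = j
        · simp [hkj, Ne.symm hij]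
        · simp [hki, hkj, hp]
    simp_rw [hmarginal, prod_mul_distrib, Fintype.prod_ite_eq']

theorem sum_prod_mul_sq_sum_of_centered {p : X → R} (hp : ∑ a, p a = 1) {g : X → R}
    (hg : ∑ a, p a * g a = 0) :
    ∑ x : ι → X, (∏ k, p (x k)) * (∑ i, g (x i)) ^ 2 =
      Fintype.card ι * ∑ a, p a * g a ^ 2 := by
  calc ∑ x : ι → X, (∏ k, p (x k)) * (∑ i, g (x i)) ^ 2
      = ∑ i, ∑ j, ∑ x : ι → X, (∏ k, p (x k)) * (g (x i) * g (x j)) := by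
        simp_rw [sq, sum_mul_sum, mul_sum]
        rw [sum_comm]
        exact sum_congr rfl fun i _ => sum_comm
    _ = ∑ i : ι, ∑ j : ι, if i = j then ∑ a, p a * g a ^ 2 else 0 := by
        simp_rw [sum_prod_mul_apply_mul_apply hp, hg, zero_mul, sq]
    _ = Fintype.card ι * ∑ a, p a * g a ^ 2 := by simp

end ProductWeights

theorem sum_filter_lt_abs_le_sum_mul_sq_div {α : Type*} [Fintype α] {w : α → ℝ}
    (hw : ∀ x, 0 ≤ w x) (F : α → ℝ) {c : ℝ} (hc : 0 < c) :
    ∑ x ∈ univ.filter (fun x => c < |F x|), w x ≤ (∑ x, w x * F x ^ 2) / c ^ 2 := by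
  rw [le_div_iff₀ (by positivity), sum_mul]
  calc ∑ x ∈ univ.filter (fun x => c < |F x|), w x * c ^ 2
      ≤ ∑ x ∈ univ.filter (fun x => c < |F x|), w x * F x ^ 2 := by
        refine sum_le_sum fun x hx => mul_le_mul_of_nonneg_left ?_ (hw x)
        rw [← sq_abs (F x)]
        exact pow_le_pow_left₀ hc.le (mem_filter.1 hx).2.le 2
    _ ≤ ∑ x, w x * F x ^ 2 :=
        sum_le_sum_of_subset_of_nonneg (filter_subset _ _) fun x _ _ =>
          mul_nonneg (hw x) (sq_nonneg _)

section WeakLaw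

variable {X : Type*} [Fintype X] {p : X → ℝ}

theorem sum_filter_lt_abs_mean_sub_le {N : ℕ} (hN : N ≠ 0) (hp0 : ∀ a, 0 ≤ p a)
    (hp : ∑ a, p a = 1) (g : X → ℝ) {ε : ℝ} (hε : 0 < ε) :
    ∑ x ∈ univ.filter (fun x : Fin N → X =>
        ε < |(1 / (N : ℝ)) * ∑ i, g (x i) - ∑ a, p a * g a|), ∏ i, p (x i) ≤
      (∑ a, p a * (g a - ∑ b, p b * g b) ^ 2) / ε ^ 2 / N := by
  set m := ∑ a, p a * g a
  have hcentered : ∑ a, p a * (g a - m) = 0 := by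
    simp only [mul_sub, sum_sub_distrib, ← sum_mul, hp, one_mul]
    exact sub_self m
  have hmean : ∀ x : Fin N → X,
      (1 / (N : ℝ)) * ∑ i, g (x i) - m = (1 / (N : ℝ)) * ∑ i, (g (x i) - m) := by
    intro x
    rw [sum_sub_distrib, sum_const, card_univ, Fintype.card_fin, nsmul_eq_mul]
    field_simp
  simp_rw [hmean]
  refine (sum_filter_lt_abs_le_sum_mul_sq_div (fun x => prod_nonneg fun i _ => hp0 (x i))
    _ hε).trans (le_of_eq ?_)
  simp_rw [mul_pow, mul_left_comm _ ((1 / (N : ℝ)) ^ 2), ← mul_sum,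
    sum_prod_mul_sq_sum_of_centered hp hcentered, Fintype.card_fin]
  field_simp

theorem tendsto_sum_filter_lt_abs_mean_sub (hp0 : ∀ a, 0 ≤ p a) (hp : ∑ a, p a = 1)
    (g : X → ℝ) {ε : ℝ} (hε : 0 < ε) :
    Tendsto (fun N : ℕ =>
      ∑ x ∈ univ.filter (fun x : Fin N → X =>
          ε < |(1 / (N : ℝ)) * ∑ i, g (x i) - ∑ a, p a * g a|), ∏ i, p (x i))
      atTop (nhds 0) := by
  refine tendsto_of_tendsto_of_tendsto_of_le_of_le' tendsto_const_nhds
    (tendsto_const_div_atTop_nhds_zero_nat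
      ((∑ a, p a * (g a - ∑ b, p b * g b) ^ 2) / ε ^ 2))
    (Eventually.of_forall fun N => sum_nonneg fun x _ => prod_nonneg fun i _ => hp0 (x i)) ?_
  filter_upwards [eventually_ne_atTop 0] with N hN
  exact sum_filter_lt_abs_mean_sub_le hN hp0 hp g hε

end WeakLaw

/-- Asymptotic equipartition property (AEP) for i.i.d. sequences: the product
measure of the set of sequences whose empirical entropy rate deviates from the
Shannon entropy `H` by more than `ε` tends to zero. -/
theorem aep_iid {X : Type*} [Fintype X] (p : X → ℝ) (hp : ∀ x, 0 < p x)
    (hsum : ∑ x, p x = 1) (ε : ℝ) (hε : 0 < ε) :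
    Tendsto (fun N : ℕ =>
      ∑ x ∈ Finset.univ.filter (fun x : Fin N → X =>
          ε < |-(1 / (N : ℝ)) * Real.log (∏ i, p (x i))
                - (-∑ a, p a * Real.log (p a))|),
          ∏ i, p (x i))
      atTop (nhds 0) := by
  have hentropy : -∑ a, p a * Real.log (p a) = ∑ a, p a * -Real.log (p a) := by
    simp only [mul_neg, sum_neg_distrib]
  have hrate : ∀ N (x : Fin N → X), -(1 / (N : ℝ)) * Real.log (∏ i, p (x i)) =
      (1 / (N : ℝ)) * ∑ i, -Real.log (p (x i)) := by
    intro N x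
    rw [Real.log_prod fun i _ => (hp (x i)).ne', sum_neg_distrib, neg_mul_comm]
  simp_rw [hentropy, hrate]
  exact tendsto_sum_filter_lt_abs_mean_sub (fun a => (hp a).le) hsum
    (fun a => -Real.log (p a)) hε
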